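/- For all k,n ∈ ℕ with k ≤ n, the lamplighter space (La(G_{k,n}), d_La) over the two-dimensional grid G_{k,n} admits a biLipschitz embedding into an ℓ1-product of 6 ℝ-trees with distortion at most 12(k+5). -/

import Mathlib

open Metric Set
open scoped Classical ENNReal NNReal

noncomputable section

/-- The underlying set of the lamplighter space over `X`: a lamp configuration
(a finite set of lit lamps) together with the position of the lamplighter. -/
abbrev Lamp (X : Type*) := Finset X × X

namespace Lamplighter

variable {X Y Z : Type*}

/-- The length of the path visiting the points of a list in order,
with respect to the distance function `d`. -/
def pathLength (d : X → X → ℝ) : List X → ℝ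
  | [] => 0
  | [_] => 0
  | x :: y :: l => d x y + pathLength d (y :: l)

/-- The symmetric difference of the lamp configurations of `p` and `q`, as a set. -/
def sd (p q : Lamp X) : Set X :=
  ((p.1 : Set X) \ (q.1 : Set X)) ∪ ((q.1 : Set X) \ (p.1 : Set X))

/-- The traveling salesman semimetric on the lamplighter space:
the infimum of lengths of finite paths starting at `p.2`, ending at `q.2`, and
visiting every point of the symmetric difference of the configurations. -/
def TSP (d : X → X → ℝ) (p q : Lamp X) : ℝ :=
  sInf { s : ℝ | ∃ l : List X, l.head? = some p.2 ∧ l.getLast? = some q.2 ∧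
    (∀ a ∈ sd p q, a ∈ l) ∧ s = pathLength d l }

/-- The diameter (in `ℝ≥0∞`) of a set with respect to a distance function `d`. -/
def ediamD (d : X → X → ℝ) (A : Set X) : ℝ≥0∞ :=
  ⨆ x ∈ A, ⨆ y ∈ A, ENNReal.ofReal (d x y)

/-- The traveling salesman shortcut semimetric:
`TSCP((A,x),(B,y)) = diam({x,y} ∪ (A Δ B))`. -/
def TSCP (d : X → X → ℝ) (p q : Lamp X) : ℝ :=
  (ediamD d ({p.2, q.2} ∪ sd p q)).toReal

/-- `ρ((A,x),(B,y))` is `0` if `A = B` and `1` otherwise. -/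
def rho (p q : Lamp X) : ℝ := if p.1 = q.1 then 0 else 1

/-- The lamplighter metric `d_La = TSP + ρ`. -/
def dLa (d : X → X → ℝ) (p q : Lamp X) : ℝ := TSP d p q + rho p q

/-- `X` is `K`-TSP-efficient if `TSP ≤ K • TSCP` on `La(X)²`. -/
def TSPEfficient (d : X → X → ℝ) (K : ℝ) : Prop :=
  ∀ p q : Lamp X, TSP d p q ≤ K * TSCP d p q

/-- A weak `C`-biLipschitz embedding between spaces with distance functions `dY`, `dZ`:
a family of maps `φ t : Y → Z` (for `t > 0`) such that each `φ t` is `σ t`-Lipschitz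
and `dY x y ≥ C*t` implies `dZ (φ t x) (φ t y) ≥ t * σ t`. -/
def WeakBiLip (dY : Y → Y → ℝ) (dZ : Z → Z → ℝ) (C : ℝ) : Prop :=
  ∃ φ : ℝ → Y → Z, ∀ t : ℝ, 0 < t → ∃ σ : ℝ, 0 < σ ∧
    (∀ x y : Y, dZ (φ t x) (φ t y) ≤ σ * dY x y) ∧
    (∀ x y : Y, C * t ≤ dY x y → t * σ ≤ dZ (φ t x) (φ t y))

/-- `f` is a `C`-biLipschitz embedding (an injective map of biLipschitz
distortion at most `C`, allowing an overall scaling factor `s`). -/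
def BiLipWith (dY : Y → Y → ℝ) (dZ : Z → Z → ℝ) (C : ℝ) (f : Y → Z) : Prop :=
  Function.Injective f ∧ ∃ s : ℝ, 0 < s ∧
    ∀ x y : Y, s * dY x y ≤ dZ (f x) (f y) ∧ dZ (f x) (f y) ≤ C * s * dY x y

/-- Nagata dimension at most `n` with constant at most `γ`: for every scale `s > 0`
there is a covering by sets of diameter at most `γ s` such that every set of diameter
less than `s` meets at most `n + 1` members of the covering. -/
def NagataDimD (d : Y → Y → ℝ) (n : ℕ) (γ : ℝ) : Prop :=
  ∀ s : ℝ, 0 < s → ∃ B : Set (Set Y),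
    (∀ y : Y, ∃ b ∈ B, y ∈ b) ∧
    (∀ b ∈ B, ediamD d b ≤ ENNReal.ofReal (γ * s)) ∧
    (∀ A : Set Y, ediamD d A < ENNReal.ofReal s →
      {b | b ∈ B ∧ (b ∩ A).Nonempty}.encard ≤ ((n : ℕ∞) + 1))

/-- Markov type 2 with constant `M`, for the distance function `d`: for every stationary
reversible Markov chain on a finite state space (given by a stationary distribution `μ`
and a reversible stochastic transition matrix `P`), every map `f` into the space, and
every time `t`, `E[d(f(Z_t),f(Z_0))²] ≤ M² t E[d(f(Z_1),f(Z_0))²]`. -/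
def HasMarkovType2 (d : Y → Y → ℝ) (M : ℝ) : Prop :=
  ∀ (n : ℕ) (μ : Fin n → ℝ) (P : Matrix (Fin n) (Fin n) ℝ),
    (∀ i, 0 ≤ μ i) → (∑ i, μ i) = 1 →
    (∀ i j, 0 ≤ P i j) → (∀ i, (∑ j, P i j) = 1) →
    (∀ i j, μ i * P i j = μ j * P j i) →
    ∀ (f : Fin n → Y) (t : ℕ),
      (∑ i, ∑ j, μ i * (P ^ t) i j * d (f i) (f j) ^ 2) ≤
        M ^ 2 * t * ∑ i, ∑ j, μ i * P i j * d (f i) (f j) ^ 2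

/-- `D`-doubling: every ball of radius `r` can be covered by `D` balls of radius `r/2`. -/
def Doubling (d : Y → Y → ℝ) (D : ℕ) : Prop :=
  ∀ r : ℝ, 0 < r → ∀ x : Y, ∃ c : Fin D → Y,
    ∀ y : Y, d x y ≤ r → ∃ i, d (c i) y ≤ r / 2

/-- `A` is an arc from `x` to `y`: the image of an injective continuous map of `[0,1]`
sending the endpoints to `x` and `y`. -/
def IsArc {T : Type*} [MetricSpace T] (x y : T) (A : Set T) : Prop :=
  ∃ γ : ℝ → T, ContinuousOn γ (Icc 0 1) ∧ InjOn γ (Icc 0 1) ∧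
    γ 0 = x ∧ γ 1 = y ∧ γ '' (Icc 0 1) = A

/-- `A` is a geodesic segment from `x` to `y`: the image of an isometric embedding
of `[0, dist x y]` sending the endpoints to `x` and `y`. -/
def IsGeodesicSeg {T : Type*} [MetricSpace T] (x y : T) (A : Set T) : Prop :=
  ∃ γ : ℝ → T, γ 0 = x ∧ γ (dist x y) = y ∧
    (∀ s ∈ Icc (0 : ℝ) (dist x y), ∀ t ∈ Icc (0 : ℝ) (dist x y),
      dist (γ s) (γ t) = |s - t|) ∧
    γ '' (Icc 0 (dist x y)) = A

/-- `T` is an ℝ-tree: any two (distinct) points are joined by a unique arc,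
and this arc is a geodesic. -/
def IsRTree (T : Type*) [MetricSpace T] : Prop :=
  ∀ x y : T, x ≠ y →
    (∃ A : Set T, IsArc x y A) ∧
    (∀ A A' : Set T, IsArc x y A → IsArc x y A' → A = A') ∧
    (∀ A : Set T, IsArc x y A → IsGeodesicSeg x y A)

/-- The sup (ℓ∞-product) distance on a finite product of metric spaces. -/
def piSupDist {n : ℕ} {T : Fin n → Type*} (I : ∀ i, MetricSpace (T i)) :
    (∀ i, T i) → (∀ i, T i) → ℝ :=
  letI := I
  fun f g => dist f g

/-- The ℓ1-product distance on a finite product of metric spaces. -/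
def piL1Dist {n : ℕ} {T : Fin n → Type*} (I : ∀ i, MetricSpace (T i)) :
    (∀ i, T i) → (∀ i, T i) → ℝ :=
  letI := I
  fun f g => ∑ i, dist (f i) (g i)

/-- The ℓ1 distance on `ℝ^m`. -/
def l1Dist (m : ℕ) (x y : Fin m → ℝ) : ℝ := ∑ i, |x i - y i|

/-- The ℓp distance on `ℝ^m`. -/
def lpDist (m : ℕ) (p : ℝ) (x y : Fin m → ℝ) : ℝ :=
  (∑ i, |x i - y i| ^ p) ^ (1 / p)

/-- The (pseudo)distance of the ℝ-star over the index type `ι`: the wedge sum of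
copies of `[0,∞)` indexed by `ι`, glued at `0`. -/
def starDist {ι : Type*} (p q : ι × ℝ≥0) : ℝ :=
  if p.1 = q.1 then |(p.2 : ℝ) - (q.2 : ℝ)| else (p.2 : ℝ) + (q.2 : ℝ)

/-- The sup (ℓ∞-product) of finitely many distance functions. -/
def supD {n : ℕ} {T : Fin n → Type*} (d : ∀ i, T i → T i → ℝ) (f g : ∀ i, T i) : ℝ :=
  ((Finset.univ.sup fun i => (d i (f i) (g i)).toNNReal : ℝ≥0) : ℝ)

/-- The infimum of distortions of biLipschitz embeddings of `(Y, dY)` into `(Z, dZ)`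
(`∞` if there is no such embedding). -/
def cEmb (dY : Y → Y → ℝ) (dZ : Z → Z → ℝ) : ℝ≥0∞ :=
  sInf { D : ℝ≥0∞ | ∃ C : ℝ, 0 < C ∧ D = ENNReal.ofReal C ∧
    ∃ f : Y → Z, BiLipWith dY dZ C f }

/-- `c_1^{m,dom}(X,d)`: the infimum of all `D > 0` such that there exist injective
`1`-Lipschitz maps `φ i : X → ℝ` and weights `α i ≥ 0` summing to `1` with
`∑ i, α i * |φ i x - φ i y| ≥ d x y / D` for all `x y` (`∞` if there is none). -/
def c1dom (d : X → X → ℝ) (m : ℕ) : ℝ≥0∞ :=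
  sInf { D : ℝ≥0∞ | ∃ C : ℝ, 0 < C ∧ D = ENNReal.ofReal C ∧
    ∃ (φ : Fin m → X → ℝ) (α : Fin m → ℝ),
      (∀ i, Function.Injective (φ i)) ∧
      (∀ i, ∀ x y : X, |φ i x - φ i y| ≤ d x y) ∧
      (∀ i, 0 ≤ α i) ∧ (∑ i, α i) = 1 ∧
      ∀ x y : X, d x y / C ≤ ∑ i, α i * |φ i x - φ i y| }

/-- The Hamming distance on the Hamming cube `{0,1}^M`, as a real number. -/
def hamDist {M : ℕ} (x y : Fin M → Bool) : ℝ :=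
  ((Finset.univ.filter fun i => x i ≠ y i).card : ℝ)

/-- The star graph `St_{n,k}`: the one-point coalescence of `n` paths of length `k`,
realized inside `ℤ^n` as the multiples `α eᵢ` with `0 ≤ α ≤ k`. -/
def St (n k : ℕ) : Type :=
  {x : Fin n → ℤ // ∃ i : Fin n, (∀ j : Fin n, j ≠ i → x j = 0) ∧ 0 ≤ x i ∧ x i ≤ (k : ℤ)}

/-- The ℓ1 metric on the star graph `St_{n,k}`. -/
def stDist {n k : ℕ} (x y : St n k) : ℝ := ∑ j, |(x.1 j : ℝ) - (y.1 j : ℝ)|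

/-- The endpoint `k eᵢ` of the `i`-th branch of the star graph. -/
def St.endpoint {n k : ℕ} (i : Fin n) : St n k :=
  ⟨fun j => if j = i then (k : ℤ) else 0, i, fun j hj => if_neg hj, by simp, by simp⟩

/-- The cycle metric on `ℤ/nℤ`. -/
def cycDist {n : ℕ} (a b : ZMod n) : ℝ := ((min ((a - b).val) ((b - a).val) : ℕ) : ℝ)

/-- The rectangular grid `G_{k,n} = ([0,k] ∩ ℤ) × ([0,n] ∩ ℤ)`. -/
def Grid2 (k n : ℕ) : Type :=
  {p : ℤ × ℤ // 0 ≤ p.1 ∧ p.1 ≤ (k : ℤ) ∧ 0 ≤ p.2 ∧ p.2 ≤ (n : ℤ)}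

/-- The ℓ1 metric on the grid `G_{k,n}`. -/
def grid2Dist {k n : ℕ} (x y : Grid2 k n) : ℝ :=
  |(x.1.1 : ℝ) - (y.1.1 : ℝ)| + |(x.1.2 : ℝ) - (y.1.2 : ℝ)|

/-- The `m`-dimensional grid `G^m({n_i}) = ∏ i, ([0, n_i] ∩ ℤ)`. -/
def GridM (m : ℕ) (n : Fin m → ℕ) : Type :=
  {p : Fin m → ℤ // ∀ i, 0 ≤ p i ∧ p i ≤ (n i : ℤ)}

/-- The ℓ1 metric on the `m`-dimensional grid. -/
def gridMDist {m : ℕ} {n : Fin m → ℕ} (x y : GridM m n) : ℝ :=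
  ∑ i, |(x.1 i : ℝ) - (y.1 i : ℝ)|

/-!
For a height function `w ≥ 0` on the grid, glue rays `[0, ∞)` indexed by lamp configurations,
the rays of `A` and `B` being identified above the largest height of a lamp in `A Δ B`. This
space is geodesic and satisfies the four-point condition, so it is an ℝ-tree, and sending
`(A, x)` to height `w x` on the ray of `A` gives distances `2 max_S w - w x - w y`, where
`S = {x, y} ∪ (A Δ B)`. With the four heights `k + n ± x₁ ± x₂` these add up to twice the
widths `W` of `S` in the two diagonal directions; two more trees (constant merge height, all
lamplighters at height `0`) give `2ρ`. A tour through `S` has length at least `W / 4`, and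
visiting the bounding box of `S` row by row, with rows of length at most `k`, costs at most
`(k + 4) W`. The distortion is thus at most `4 (k + 4) ≤ 12 (k + 5)`.
-/

section RTree

def Separates {T : Type*} [TopologicalSpace T] (g x y : T) : Prop :=
  ∃ U V : Set T, IsOpen U ∧ IsOpen V ∧ x ∈ U ∧ y ∈ V ∧ Disjoint U V ∧ {g}ᶜ ⊆ U ∪ V

/-- `0`-hyperbolicity in the sense of Gromov. -/
def FourPointCondition (T : Type*) [MetricSpace T] : Prop :=
  ∀ x y z w : T, dist x y + dist z w ≤ max (dist x z + dist y w) (dist x w + dist y z)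

variable {T : Type*} [MetricSpace T]

/-- An arc `A` from `x` to `y` contains `G`, since every interior point of `G` separates `x`
from `y`; and `G` pulls back along the embedding `[0,1] → A` to a connected set containing `0`
and `1`, so `A ⊆ G`. -/
theorem IsArc.eq_of_separates {x y : T} {G A : Set T} (hG : IsArc x y G)
    (hsep : ∀ g ∈ G, g ≠ x → g ≠ y → Separates g x y) (hA : IsArc x y A) : A = G := by
  obtain ⟨γ, hγc, hγi, hγ0, hγ1, rfl⟩ := hA
  obtain ⟨η, hηc, -, hη0, hη1, rfl⟩ := hG
  have h0 : (0 : ℝ) ∈ Icc 0 1 := ⟨le_rfl, zero_le_one⟩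
  have h1 : (1 : ℝ) ∈ Icc 0 1 := ⟨zero_le_one, le_rfl⟩
  have hGA : η '' Icc 0 1 ⊆ γ '' Icc 0 1 := by
    rintro g hg
    by_contra hgA
    have hgx : g ≠ x := by rintro rfl; exact hgA ⟨0, h0, hγ0⟩
    have hgy : g ≠ y := by rintro rfl; exact hgA ⟨1, h1, hγ1⟩
    obtain ⟨U, V, hU, hV, hxU, hyV, hUV, hcov⟩ := hsep g hg hgx hgy
    obtain ⟨z, -, hzU, hzV⟩ := (isPreconnected_Icc.image γ hγc) U V hU hV
      (fun z hz => hcov fun hzg => hgA (hzg ▸ hz)) ⟨x, ⟨0, h0, hγ0⟩, hxU⟩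
      ⟨y, ⟨1, h1, hγ1⟩, hyV⟩
    exact hUV.ne_of_mem hzU hzV rfl
  refine hGA.antisymm' ?_
  set e : Icc (0 : ℝ) 1 → T := fun θ => γ θ
  have he : Topology.IsInducing e :=
    (hγc.domRestrict.isClosedEmbedding fun a b hab =>
      Subtype.ext (hγi a.2 b.2 hab)).isInducing
  have hpre : IsPreconnected (e ⁻¹' (η '' Icc 0 1)) := by
    rw [← he.isPreconnected_image, image_preimage_eq_of_subset]
    · exact isPreconnected_Icc.image η hηc
    · rintro g hg
      obtain ⟨θ, hθ, rfl⟩ := hGA hg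
      exact ⟨⟨θ, hθ⟩, rfl⟩
  have hIcc : Icc (0 : ℝ) 1 ⊆ (↑) '' (e ⁻¹' (η '' Icc 0 1)) :=
    (hpre.image _ continuous_subtype_val.continuousOn).Icc_subset
      ⟨⟨0, h0⟩, ⟨0, h0, hη0.trans hγ0.symm⟩, rfl⟩ ⟨⟨1, h1⟩, ⟨1, h1, hη1.trans hγ1.symm⟩, rfl⟩
  rintro _ ⟨θ, hθ, rfl⟩
  obtain ⟨θ', hθ', rfl⟩ := hIcc hθ
  exact hθ'

/-- One side consists of the points `z` whose geodesics to `x` avoid `g`. -/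
theorem FourPointCondition.separates (h4 : FourPointCondition T) {x y g : T}
    (hg : dist x g + dist g y = dist x y) (hgx : g ≠ x) (hgy : g ≠ y) : Separates g x y := by
  refine ⟨{z | dist z x < dist z g + dist g x}, {z | z ≠ g ∧ dist z x = dist z g + dist g x},
    isOpen_lt (by fun_prop) (by fun_prop), ?_, ?_, ⟨hgy.symm, ?_⟩, ?_, ?_⟩
  · refine Metric.isOpen_iff.2 fun z ⟨hzg, hz⟩ => ⟨dist z g / 2, half_pos (dist_pos.2 hzg),
      fun w hw => ?_⟩
    rw [Metric.mem_ball, dist_comm] at hw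
    refine ⟨by rintro rfl; linarith [dist_nonneg (x := z) (y := w)], ?_⟩
    have := dist_triangle w g x
    have := dist_triangle z w g
    rcases le_max_iff.1 (h4 x z g w) with h | h <;>
      linarith [dist_comm x z, dist_comm x g, dist_comm x w, dist_comm g w,
        dist_nonneg (x := g) (y := w), dist_nonneg (x := z) (y := g)]
  · rw [mem_ofPred_eq, dist_self]
    linarith [dist_pos.2 hgx, dist_comm x g]
  · linarith [dist_comm y x, dist_comm y g, dist_comm x g]
  · exact Set.disjoint_left.2 fun z hU hV => hU.ne hV.2
  · intro z hz
    rcases (dist_triangle z g x).lt_or_eq with h | h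
    · exact Or.inl h
    · exact Or.inr ⟨hz, h⟩

theorem IsGeodesicSeg.dist_add_dist {x y g : T} {G : Set T} (hG : IsGeodesicSeg x y G)
    (hg : g ∈ G) : dist x g + dist g y = dist x y := by
  obtain ⟨γ, hγ0, hγ1, hγ, rfl⟩ := hG
  obtain ⟨r, hr, rfl⟩ := hg
  have hD : (0 : ℝ) ∈ Icc 0 (dist x y) := ⟨le_rfl, dist_nonneg⟩
  have hD' : dist x y ∈ Icc 0 (dist x y) := ⟨dist_nonneg, le_rfl⟩
  have hx := hγ 0 hD r hr
  have hy := hγ r hr _ hD'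
  rw [hγ0] at hx
  rw [hγ1] at hy
  rw [hx, hy, abs_of_nonpos (by linarith [hr.1]), abs_of_nonpos (by linarith [hr.2])]
  ring

theorem IsGeodesicSeg.isArc {x y : T} {G : Set T} (hG : IsGeodesicSeg x y G) (hxy : x ≠ y) :
    IsArc x y G := by
  obtain ⟨γ, hγ0, hγ1, hγ, rfl⟩ := hG
  set D := dist x y
  have hD : 0 < D := dist_pos.2 hxy
  have hmem : MapsTo (· * D) (Icc (0 : ℝ) 1) (Icc 0 D) := fun θ hθ =>
    ⟨by nlinarith [hθ.1], by nlinarith [hθ.2]⟩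
  have hdist : ∀ θ ∈ Icc (0 : ℝ) 1, ∀ θ' ∈ Icc (0 : ℝ) 1,
      dist (γ (θ * D)) (γ (θ' * D)) = dist θ θ' * D := fun θ hθ θ' hθ' => by
    rw [hγ _ (hmem hθ) _ (hmem hθ'), ← sub_mul, abs_mul, abs_of_pos hD, Real.dist_eq]
  refine ⟨fun θ => γ (θ * D), ?_, fun θ hθ θ' hθ' h => ?_, by simpa using hγ0,
    by simpa using hγ1, ?_⟩
  · refine (LipschitzOnWith.of_dist_le_mul fun θ hθ θ' hθ' => ?_).continuousOn (K := D.toNNReal)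
    rw [hdist θ hθ θ' hθ', Real.coe_toNNReal _ hD.le, mul_comm]
  · have := hdist θ hθ θ' hθ'
    dsimp only at h
    rw [h, dist_self, eq_comm, mul_eq_zero] at this
    exact dist_eq_zero.1 (this.resolve_right hD.ne')
  · rw [← image_image (g := γ) (f := (· * D)), image_mul_right_Icc zero_le_one hD.le, zero_mul,
      one_mul]

theorem FourPointCondition.isRTree (h4 : FourPointCondition T)
    (hgeo : ∀ x y : T, ∃ G, IsGeodesicSeg x y G) : IsRTree T := by
  intro x y hxy
  obtain ⟨G, hG⟩ := hgeo x y
  have hGarc := hG.isArc hxy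
  have huniq : ∀ A, IsArc x y A → A = G := fun A hA =>
    hGarc.eq_of_separates (fun g hg hgx hgy => h4.separates (hG.dist_add_dist hg) hgx hgy) hA
  exact ⟨⟨G, hGarc⟩, fun A A' hA hA' => (huniq A hA).trans (huniq A' hA').symm,
    fun A hA => huniq A hA ▸ hG⟩

end RTree

theorem add_le_max_add_of_le_max {α : Type*} {M : α → α → ℝ} (hcomm : ∀ a b, M a b = M b a)
    (hle : ∀ a b c, M a c ≤ max (M a b) (M b c)) (x y z w : α) :
    M x y + M z w ≤ max (M x z + M y w) (M x w + M y z) := by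
  have h1 := hle x z y
  have h2 := hle x w y
  have h3 := hle z x w
  have h4 := hle z y w
  rw [hcomm z y] at h1
  rw [hcomm w y] at h2
  rw [hcomm z x] at h3
  rw [hcomm z y] at h4
  by_contra! h
  rw [max_lt_iff] at h
  rcases le_max_iff.1 h1 with h1 | h1 <;> rcases le_max_iff.1 h2 with h2 | h2 <;>
    rcases le_max_iff.1 h3 with h3 | h3 <;> rcases le_max_iff.1 h4 with h4 | h4 <;> linarith

/-- Gluing rays `Λ × [0, ∞)`: the rays of `a` and `b` are identified at all heights
`≥ merge a b`. The ultrametric inequality for `merge` makes the result a tree. -/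
structure RayGluing (Λ : Type*) where
  merge : Λ → Λ → ℝ
  merge_comm : ∀ a b, merge a b = merge b a
  merge_le_max : ∀ a b c, merge a c ≤ max (merge a b) (merge b c)
  merge_self_nonpos : ∀ a, merge a a ≤ 0

namespace RayGluing

variable {Λ : Type*} (G : RayGluing Λ)

/-- The height at which the geodesics from `p` and `q` towards the common end meet. -/
def meet (p q : Λ × ℝ≥0) : ℝ := max (max (p.2 : ℝ) q.2) (G.merge p.1 q.1)

lemma le_meet_left (p q : Λ × ℝ≥0) : (p.2 : ℝ) ≤ G.meet p q :=
  le_max_of_le_left (le_max_left _ _)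

lemma le_meet_right (p q : Λ × ℝ≥0) : (q.2 : ℝ) ≤ G.meet p q :=
  le_max_of_le_left (le_max_right _ _)

lemma meet_comm (p q : Λ × ℝ≥0) : G.meet p q = G.meet q p := by
  rw [meet, meet, max_comm (p.2 : ℝ), G.merge_comm]

lemma meet_self (p : Λ × ℝ≥0) : G.meet p p = p.2 := by
  rw [meet, max_self, max_eq_left ((G.merge_self_nonpos p.1).trans p.2.coe_nonneg)]

lemma meet_le_max (p q r : Λ × ℝ≥0) : G.meet p r ≤ max (G.meet p q) (G.meet q r) := by
  refine max_le (max_le (le_max_of_le_left (G.le_meet_left p q))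
    (le_max_of_le_right (G.le_meet_right q r))) ((G.merge_le_max _ q.1 _).trans ?_)
  exact max_le_max (le_max_right _ _) (le_max_right _ _)

def Rays (_ : RayGluing Λ) : Type _ := Λ × ℝ≥0

instance : PseudoMetricSpace G.Rays where
  dist p q := 2 * G.meet p q - p.2 - q.2
  dist_self p := by linarith [G.meet_self p]
  dist_comm p q := by linarith [G.meet_comm p q]
  dist_triangle p q r := by
    have := G.le_meet_right p q
    have := G.le_meet_left q r
    rcases le_max_iff.1 (G.meet_le_max p q r) with h | h <;> linarith

lemma dist_rays (p q : G.Rays) : dist p q = 2 * G.meet p q - p.2 - q.2 := rfl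

lemma fourPoint_rays (x y z w : G.Rays) :
    dist x y + dist z w ≤ max (dist x z + dist y w) (dist x w + dist y z) := by
  have := add_le_max_add_of_le_max G.meet_comm G.meet_le_max x y z w
  simp only [dist_rays]
  rcases le_max_iff.1 this with h | h
  · exact le_max_of_le_left (by linarith)
  · exact le_max_of_le_right (by linarith)

/-- Heights below `0` are read as `0`. -/
def ray (a : Λ) (h : ℝ) : G.Rays := (a, h.toNNReal)

lemma dist_ray_ray {a : Λ} {h h' : ℝ} (hh : 0 ≤ h) (hh' : 0 ≤ h') :
    dist (G.ray a h) (G.ray a h') = |h - h'| := by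
  rw [dist_rays]
  simp only [meet, ray]
  rw [Real.coe_toNNReal _ hh, Real.coe_toNNReal _ hh',
    max_eq_left ((G.merge_self_nonpos a).trans (le_max_of_le_left hh))]
  rcases le_total h h' with h | h
  · rw [max_eq_right h, abs_of_nonpos (by linarith)]; ring
  · rw [max_eq_left h, abs_of_nonneg (by linarith)]; ring

lemma dist_ray_ray_of_le_meet {p q : G.Rays} {h h' : ℝ} (hh : h ∈ Icc (p.2 : ℝ) (G.meet p q))
    (hh' : h' ∈ Icc (q.2 : ℝ) (G.meet p q)) :
    dist (G.ray p.1 h) (G.ray q.1 h') = 2 * G.meet p q - h - h' := by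
  have h0 : 0 ≤ h := p.2.coe_nonneg.trans hh.1
  have h0' : 0 ≤ h' := q.2.coe_nonneg.trans hh'.1
  have hmeet : G.meet (G.ray p.1 h) (G.ray q.1 h') = G.meet p q := by
    simp only [meet, ray]
    rw [Real.coe_toNNReal _ h0, Real.coe_toNNReal _ h0']
    exact le_antisymm (max_le (max_le hh.2 hh'.2) (le_max_right _ _))
      (max_le_max (max_le_max hh.1 hh'.1) le_rfl)
  rw [dist_rays, hmeet]
  simp only [ray]
  rw [Real.coe_toNNReal _ h0, Real.coe_toNNReal _ h0']

/-- The geodesic from `p` up to the meeting height and down to `q`, parametrized by arc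
length. -/
def geodesic (p q : G.Rays) (r : ℝ) : G.Rays :=
  if r ≤ G.meet p q - p.2 then G.ray p.1 (p.2 + r) else G.ray q.1 (2 * G.meet p q - p.2 - r)

lemma dist_geodesic {p q : G.Rays} {a b : ℝ} (ha : a ∈ Icc 0 (dist p q))
    (hb : b ∈ Icc 0 (dist p q)) : dist (G.geodesic p q a) (G.geodesic p q b) = |a - b| := by
  rw [dist_rays] at ha hb
  have hp := G.le_meet_left p q
  have hq := G.le_meet_right p q
  unfold geodesic
  split_ifs with h₁ h₂ h₂
  · rw [dist_ray_ray _ (by linarith [ha.1]) (by linarith [hb.1])]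
    congr 1; ring
  · rw [dist_ray_ray_of_le_meet _ ⟨by linarith [ha.1], by linarith⟩ ⟨by linarith [hb.2],
      by linarith⟩, abs_of_nonpos (by linarith)]
    ring
  · rw [dist_comm, dist_ray_ray_of_le_meet _ ⟨by linarith [hb.1], by linarith⟩
      ⟨by linarith [ha.2], by linarith⟩, abs_of_nonneg (by linarith)]
    ring
  · rw [dist_ray_ray _ (by linarith [ha.2]) (by linarith [hb.2])]
    rw [← abs_neg]
    congr 1; ring

lemma geodesic_zero (p q : G.Rays) : G.geodesic p q 0 = p := by
  rw [geodesic, if_pos (by linarith [G.le_meet_left p q]), add_zero, ray, Real.toNNReal_coe]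
  rfl

lemma dist_geodesic_dist (p q : G.Rays) : dist (G.geodesic p q (dist p q)) q = 0 := by
  have hp := G.le_meet_left p q
  have hq := G.le_meet_right p q
  have hq' : G.ray q.1 q.2 = q := by rw [ray, Real.toNNReal_coe]; rfl
  rw [geodesic, G.dist_rays p q]
  split_ifs with h
  · have := G.dist_ray_ray_of_le_meet (h := p.2 + (2 * G.meet p q - p.2 - q.2))
      ⟨by linarith, by linarith⟩ ⟨le_rfl, hq⟩
    rw [hq'] at this
    rw [this]
    ring
  · rw [show 2 * G.meet p q - p.2 - (2 * G.meet p q - p.2 - q.2) = q.2 by ring, hq', dist_self]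

abbrev Tree := SeparationQuotient G.Rays

lemma fourPointCondition_tree : FourPointCondition G.Tree := by
  simp only [FourPointCondition, SeparationQuotient.surjective_mk.forall,
    SeparationQuotient.dist_mk]
  exact G.fourPoint_rays

lemma exists_isGeodesicSeg (x y : G.Tree) : ∃ A, IsGeodesicSeg x y A := by
  obtain ⟨p, rfl⟩ := SeparationQuotient.surjective_mk x
  obtain ⟨q, rfl⟩ := SeparationQuotient.surjective_mk y
  refine ⟨_, fun r => SeparationQuotient.mk (G.geodesic p q r), ?_, ?_, ?_, rfl⟩
  · exact congrArg _ (G.geodesic_zero p q)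
  · rw [SeparationQuotient.dist_mk, SeparationQuotient.mk_eq_mk, Metric.inseparable_iff]
    exact G.dist_geodesic_dist p q
  · simp only [SeparationQuotient.dist_mk]
    exact fun a ha b hb => G.dist_geodesic ha hb

theorem isRTree : IsRTree G.Tree :=
  G.fourPointCondition_tree.isRTree G.exists_isGeodesicSeg

end RayGluing

section TSP

variable {d : X → X → ℝ}

lemma pathLength_nonneg (hd : ∀ a b, 0 ≤ d a b) : ∀ l : List X, 0 ≤ pathLength d l
  | [] => le_rfl
  | [_] => le_rfl
  | _ :: b :: l => add_nonneg (hd _ _) (pathLength_nonneg hd (b :: l))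

lemma pathLength_append_singleton {b : X} (y : X) :
    ∀ {l : List X}, l.getLast? = some b → pathLength d (l ++ [y]) = pathLength d l + d b y
  | [a], h => by simp_all [pathLength]
  | a :: c :: l, h => by
    rw [List.getLast?_cons_cons] at h
    change d a c + pathLength d (c :: l ++ [y]) = d a c + pathLength d (c :: l) + d b y
    rw [pathLength_append_singleton y h, add_assoc]

lemma pathLength_map_range (F : ℕ → X) :
    ∀ N : ℕ,
      pathLength d ((List.range (N + 1)).map F) = ∑ m ∈ Finset.range N, d (F m) (F (m + 1))
  | 0 => rfl
  | N + 1 => by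
    rw [List.range_succ, List.map_append, List.map_singleton,
      pathLength_append_singleton (b := F N) _ (by simp [List.getLast?_range]),
      pathLength_map_range F N, Finset.sum_range_succ]

lemma abs_sub_le_pathLength (hd : ∀ a b, 0 ≤ d a b) {g : X → ℝ}
    (hg : ∀ a b, |g a - g b| ≤ d a b) (l : List X) :
    ∀ x, ∀ z ∈ x :: l, |g z - g x| ≤ pathLength d (x :: l) := by
  induction l with
  | nil => simp [pathLength]
  | cons y l ih =>
    intro x z hz
    rcases List.mem_cons.1 hz with rfl | hz
    · simpa using pathLength_nonneg hd (z :: y :: l)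
    have := ih y z hz
    have := abs_sub_comm (g x) (g y) ▸ hg x y
    calc |g z - g x| ≤ |g z - g y| + |g y - g x| := abs_sub_le _ _ _
      _ ≤ d x y + pathLength d (y :: l) := by linarith
      _ = pathLength d (x :: y :: l) := rfl

/-- The lists over which `TSP d p q` is the infimum of path lengths. -/
def IsTour (p q : Lamp X) (l : List X) : Prop :=
  l.head? = some p.2 ∧ l.getLast? = some q.2 ∧ ∀ a ∈ sd p q, a ∈ l

lemma mem_sd_iff {p q : Lamp X} {a : X} : a ∈ sd p q ↔ a ∈ symmDiff p.1 q.1 := by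
  simp only [sd, Set.mem_union, Set.mem_sdiff, Finset.mem_coe, Finset.mem_symmDiff]

lemma exists_isTour (p q : Lamp X) : ∃ l, IsTour p q l :=
  ⟨p.2 :: (symmDiff p.1 q.1).toList ++ [q.2], rfl, List.getLast?_concat,
    fun _ ha => List.mem_append_left _ (List.mem_cons_of_mem _
      (Finset.mem_toList.2 (mem_sd_iff.1 ha)))⟩

lemma TSP_le_pathLength (hd : ∀ a b, 0 ≤ d a b) {p q : Lamp X} {l : List X}
    (hl : IsTour p q l) : TSP d p q ≤ pathLength d l :=
  csInf_le ⟨0, by rintro _ ⟨l, -, -, -, rfl⟩; exact pathLength_nonneg hd l⟩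
    ⟨l, hl.1, hl.2.1, hl.2.2, rfl⟩

lemma le_TSP {p q : Lamp X} {c : ℝ} (h : ∀ l, IsTour p q l → c ≤ pathLength d l) :
    c ≤ TSP d p q := by
  obtain ⟨l, hl⟩ := exists_isTour p q
  refine le_csInf ⟨_, l, hl.1, hl.2.1, hl.2.2, rfl⟩ ?_
  rintro _ ⟨l, h1, h2, h3, rfl⟩
  exact h l ⟨h1, h2, h3⟩

lemma TSP_nonneg (hd : ∀ a b, 0 ≤ d a b) (p q : Lamp X) : 0 ≤ TSP d p q :=
  le_TSP fun l _ => pathLength_nonneg hd l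

lemma rho_nonneg (p q : Lamp X) : 0 ≤ rho p q := by
  unfold rho; split_ifs <;> norm_num

lemma dLa_nonneg (hd : ∀ a b, 0 ≤ d a b) (p q : Lamp X) : 0 ≤ dLa d p q :=
  add_nonneg (TSP_nonneg hd p q) (rho_nonneg p q)

lemma TSP_le_add_pathLength_add (hd : ∀ a b, 0 ≤ d a b) {p q : Lamp X} {l : List X} {a b : X}
    (ha : l.head? = some a) (hb : l.getLast? = some b) (hl : ∀ z ∈ sd p q, z ∈ l) :
    TSP d p q ≤ d p.2 a + pathLength d l + d b q.2 := by
  obtain ⟨t, rfl⟩ := List.head?_eq_some_iff.1 ha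
  have htour : IsTour p q (p.2 :: a :: t ++ [q.2]) :=
    ⟨rfl, List.getLast?_concat, fun z hz =>
      List.mem_append_left _ (List.mem_cons_of_mem _ (hl z hz))⟩
  calc TSP d p q ≤ pathLength d (p.2 :: a :: t ++ [q.2]) := TSP_le_pathLength hd htour
    _ = d p.2 a + (pathLength d (a :: t) + d b q.2) := by
      rw [List.cons_append, List.cons_append, pathLength, ← List.cons_append,
        pathLength_append_singleton _ hb]
    _ = _ := by ring

/-- `{x, y} ∪ (A Δ B)`: the points every tour from `p` to `q` visits. -/
def support (p q : Lamp X) : Finset X := insert p.2 (insert q.2 (symmDiff p.1 q.1))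

lemma mem_support_left (p q : Lamp X) : p.2 ∈ support p q := Finset.mem_insert_self _ _

lemma mem_support_right (p q : Lamp X) : q.2 ∈ support p q :=
  Finset.mem_insert_of_mem (Finset.mem_insert_self _ _)

lemma mem_support_of_mem_sd {p q : Lamp X} {z : X} (hz : z ∈ sd p q) : z ∈ support p q :=
  Finset.mem_insert_of_mem (Finset.mem_insert_of_mem (mem_sd_iff.1 hz))

lemma IsTour.mem_of_mem_support {p q : Lamp X} {l : List X} (hl : IsTour p q l) {z : X}
    (hz : z ∈ support p q) : z ∈ l := by
  rcases Finset.mem_insert.1 hz with rfl | hz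
  · exact List.mem_of_mem_head? hl.1
  rcases Finset.mem_insert.1 hz with rfl | hz
  · exact List.mem_of_mem_getLast? hl.2.1
  · exact hl.2.2 z (mem_sd_iff.2 hz)

lemma sub_le_TSP (hd : ∀ a b, 0 ≤ d a b) {g : X → ℝ} (hg : ∀ a b, |g a - g b| ≤ d a b)
    {p q : Lamp X} {z : X} (hz : z ∈ support p q) : g z - g p.2 ≤ TSP d p q := by
  refine le_TSP fun l hl => ?_
  obtain ⟨t, rfl⟩ := List.head?_eq_some_iff.1 hl.1
  exact (le_abs_self _).trans (abs_sub_le_pathLength hd hg t _ z (hl.mem_of_mem_support hz))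

end TSP

section LampTrees

def lampGluing (m : X → ℝ≥0) : RayGluing (Finset X) where
  merge A B := ((symmDiff A B).sup m : ℝ≥0)
  merge_comm A B := by rw [symmDiff_comm]
  merge_le_max A B C := by
    rw [← NNReal.coe_max, NNReal.coe_le_coe, ← Finset.sup_union]
    exact Finset.sup_mono (symmDiff_triangle A B C)
  merge_self_nonpos A := by simp

def lampToTree (m ℓ : X → ℝ≥0) (p : Lamp X) : (lampGluing m).Tree :=
  SeparationQuotient.mk (X := (lampGluing m).Rays) (p.1, ℓ p.2)

lemma dist_lampToTree (m ℓ : X → ℝ≥0) (p q : Lamp X) :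
    dist (lampToTree m ℓ p) (lampToTree m ℓ q) =
      2 * max (max (ℓ p.2 : ℝ) (ℓ q.2)) ((symmDiff p.1 q.1).sup m : ℝ≥0) - ℓ p.2 - ℓ q.2 :=
  rfl

lemma dist_lampToTree_of_eq {w ℓ : X → ℝ≥0} (h : ℓ = w) (p q : Lamp X) :
    dist (lampToTree w ℓ p) (lampToTree w ℓ q) =
      2 * (((support p q).sup w : ℝ≥0) : ℝ) - w p.2 - w q.2 := by
  rw [h, dist_lampToTree, support, Finset.sup_insert, Finset.sup_insert, NNReal.coe_max,
    NNReal.coe_max, max_assoc]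

lemma dist_lampToTree_eq_rho {m ℓ : X → ℝ≥0} (hm : m = fun _ => 1 / 2) (hℓ : ℓ = 0)
    (p q : Lamp X) : dist (lampToTree m ℓ p) (lampToTree m ℓ q) = rho p q := by
  subst hm hℓ
  rw [dist_lampToTree, rho]
  rcases (symmDiff p.1 q.1).eq_empty_or_nonempty with h | h
  · simp [symmDiff_eq_bot.1 h]
  · rw [Finset.sup_const h, if_neg fun hpq => h.ne_empty (symmDiff_eq_bot.2 hpq)]
    norm_num

def excess (w : X → ℝ≥0) (p q : Lamp X) : ℝ := (((support p q).sup w : ℝ≥0) : ℝ) - w p.2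

lemma sub_le_excess (w : X → ℝ≥0) {p q : Lamp X} {z : X} (hz : z ∈ support p q) :
    (w z : ℝ) - w p.2 ≤ excess w p q :=
  sub_le_sub_right (NNReal.coe_le_coe.2 (Finset.le_sup hz)) _

lemma excess_le_TSP {d : X → X → ℝ} (hd : ∀ a b, 0 ≤ d a b) {w : X → ℝ≥0}
    (hw : ∀ a b, |(w a : ℝ) - w b| ≤ d a b) (p q : Lamp X) : excess w p q ≤ TSP d p q := by
  obtain ⟨z, hz, hzw⟩ := Finset.exists_mem_eq_sup _ ⟨_, mem_support_left p q⟩ w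
  rw [excess, hzw]
  exact sub_le_TSP hd hw hz

end LampTrees

lemma BiLipWith.mono {dY : Y → Y → ℝ} {dZ : Z → Z → ℝ} {C C' : ℝ} {f : Y → Z}
    (h : BiLipWith dY dZ C f) (hC : C ≤ C') (hdY : ∀ x y, 0 ≤ dY x y) : BiLipWith dY dZ C' f := by
  obtain ⟨hinj, s, hs, hf⟩ := h
  exact ⟨hinj, s, hs, fun x y => ⟨(hf x y).1, (hf x y).2.trans
    (mul_le_mul_of_nonneg_right (mul_le_mul_of_nonneg_right hC hs.le) (hdY x y))⟩⟩

lemma exists_forall_mem_Icc {α : Type*} {S : Finset α} (hS : S.Nonempty) (f : α → ℤ) :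
    ∃ (a : ℤ) (r : ℕ), (∀ z ∈ S, f z ∈ Icc a (a + r)) ∧ ∃ z ∈ S, ∃ z' ∈ S, f z - f z' = r := by
  obtain ⟨z, hz, hzf⟩ := S.exists_mem_eq_sup' hS f
  obtain ⟨z', hz', hz'f⟩ := S.exists_mem_eq_inf' hS f
  have hle : f z' ≤ f z := by
    rw [← hzf, ← hz'f]; exact (S.inf'_le f hz).trans (S.le_sup' f hz)
  refine ⟨f z', (f z - f z').toNat, fun y hy => ⟨?_, ?_⟩, z, hz, z', hz', by omega⟩
  · exact hz'f ▸ S.inf'_le f hy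
  · have := hzf ▸ S.le_sup' f hy
    omega

section Grid

variable {k n : ℕ}

lemma grid2Dist_nonneg (x y : Grid2 k n) : 0 ≤ grid2Dist x y := by
  unfold grid2Dist; positivity

lemma grid2Dist_comm (x y : Grid2 k n) : grid2Dist x y = grid2Dist y x := by
  unfold grid2Dist; rw [abs_sub_comm, abs_sub_comm (x.1.2 : ℝ)]

def Grid2.clamp (i j : ℤ) : Grid2 k n := ⟨(max 0 (min i k), max 0 (min j n)), by omega⟩

lemma Grid2.clamp_self (z : Grid2 k n) : Grid2.clamp z.1.1 z.1.2 = z := by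
  obtain ⟨⟨i, j⟩, h⟩ := z
  refine Subtype.ext (Prod.ext ?_ ?_)
  · show max 0 (min i k) = i; omega
  · show max 0 (min j n) = j; omega

lemma grid2Dist_clamp_le (i j i' j' : ℤ) :
    grid2Dist (Grid2.clamp i j : Grid2 k n) (Grid2.clamp i' j') ≤
      |(i : ℝ) - i'| + |(j : ℝ) - j'| := by
  have hi : |max 0 (min i k) - max 0 (min i' k)| ≤ |i - i'| := by
    have := le_abs_self (i - i'); have := neg_abs_le (i - i'); rw [abs_le]; omega
  have hj : |max 0 (min j n) - max 0 (min j' n)| ≤ |j - j'| := by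
    have := le_abs_self (j - j'); have := neg_abs_le (j - j'); rw [abs_le]; omega
  unfold grid2Dist Grid2.clamp
  push_cast [← Int.cast_sub, ← Int.cast_abs] at hi hj ⊢
  exact add_le_add (by exact_mod_cast hi) (by exact_mod_cast hj)

/-- Enumerating `ℕ` row by row in rows of length `c`, the step from `m` to `m + 1` moves by
one inside a row and by `c` across a row change. -/
lemma abs_mod_sub_add_abs_div_sub_le (m c : ℕ) :
    |((m % c : ℕ) : ℝ) - ((m + 1) % c : ℕ)| + |((m / c : ℕ) : ℝ) - ((m + 1) / c : ℕ)| ≤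
      1 + (c + 1) * ((((m + 1) / c : ℕ) : ℝ) - (m / c : ℕ)) := by
  have h := Nat.mod_add_div m c
  have h' := Nat.mod_add_div (m + 1) c
  have hq : ((m / c : ℕ) : ℝ) ≤ ((m + 1) / c : ℕ) := by
    exact_mod_cast Nat.div_le_div_right (Nat.le_succ m)
  set i := m % c; set i' := (m + 1) % c; set q := m / c; set q' := (m + 1) / c
  have e : (i : ℝ) + c * q + 1 = i' + c * q' := by
    exact_mod_cast (by omega : i + c * q + 1 = i' + c * q')
  have hcq : 0 ≤ (c : ℝ) * (q' - q) := mul_nonneg (Nat.cast_nonneg _) (sub_nonneg.2 hq)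
  have hi : |(i : ℝ) - i'| ≤ c * (q' - q) + 1 := abs_le.2 ⟨by linarith, by linarith⟩
  rw [abs_sub_comm (q : ℝ), abs_of_nonneg (sub_nonneg.2 hq)]
  linarith

lemma exists_box_tour (a₁ a₂ : ℤ) (r₁ r₂ : ℕ) :
    ∃ l : List (Grid2 k n), l.head? = some (Grid2.clamp a₁ a₂) ∧
      l.getLast? = some (Grid2.clamp (a₁ + r₁) (a₂ + r₂)) ∧
      (∀ z : Grid2 k n, z.1.1 ∈ Icc a₁ (a₁ + r₁) → z.1.2 ∈ Icc a₂ (a₂ + r₂) → z ∈ l) ∧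
      pathLength grid2Dist l ≤ r₁ + (2 * r₁ + 3) * r₂ := by
  set c := r₁ + 1
  set F : ℕ → Grid2 k n := fun m => Grid2.clamp (a₁ + (m % c : ℕ)) (a₂ + (m / c : ℕ))
  set N := r₁ + c * r₂
  have hNmod : N % c = r₁ := by rw [Nat.add_mul_mod_self_left, Nat.mod_eq_of_lt (by omega)]
  have hNdiv : N / c = r₂ := by
    rw [Nat.add_mul_div_left _ _ (by omega), Nat.div_eq_of_lt (by omega), zero_add]
  refine ⟨(List.range (N + 1)).map F, ?_, ?_, fun z ⟨hz₁, hz₁'⟩ ⟨hz₂, hz₂'⟩ => ?_, ?_⟩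
  · simp only [List.head?_map, List.head?_range, if_neg (Nat.succ_ne_zero N), Option.map_some,
      F, Nat.zero_mod, Nat.zero_div, Nat.cast_zero, add_zero]
  · simp only [List.getLast?_map, List.getLast?_range, if_neg (Nat.succ_ne_zero N),
      Nat.add_sub_cancel, Option.map_some, F, hNmod, hNdiv]
  · obtain ⟨i, hi⟩ : ∃ i : ℕ, z.1.1 = a₁ + i := ⟨(z.1.1 - a₁).toNat, by omega⟩
    obtain ⟨j, hj⟩ : ∃ j : ℕ, z.1.2 = a₂ + j := ⟨(z.1.2 - a₂).toNat, by omega⟩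
    have hic : i < c := by omega
    have hjr : j ≤ r₂ := by omega
    refine List.mem_map.2 ⟨i + c * j, List.mem_range.2 ?_, ?_⟩
    · have := Nat.mul_le_mul_left c hjr
      omega
    · simp only [F, Nat.add_mul_mod_self_left, Nat.mod_eq_of_lt hic,
        Nat.add_mul_div_left _ _ (by omega : 0 < c), Nat.div_eq_of_lt hic, zero_add, ← hi, ← hj,
        Grid2.clamp_self]
  · rw [pathLength_map_range]
    calc ∑ m ∈ Finset.range N, grid2Dist (F m) (F (m + 1))
        ≤ ∑ m ∈ Finset.range N, (1 + (c + 1) * ((((m + 1) / c : ℕ) : ℝ) - (m / c : ℕ))) := by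
          refine Finset.sum_le_sum fun m _ => (grid2Dist_clamp_le _ _ _ _).trans ?_
          simpa only [Int.cast_add, Int.cast_natCast, add_sub_add_left_eq_sub]
            using abs_mod_sub_add_abs_div_sub_le m c
      _ = N + (c + 1) * r₂ := by
          rw [Finset.sum_add_distrib, ← Finset.mul_sum,
            Finset.sum_range_sub (fun m => ((m / c : ℕ) : ℝ)), hNdiv]
          simp
      _ = r₁ + (2 * r₁ + 3) * r₂ := by simp only [N, c]; push_cast; ring

end Grid

section GridLamplighter

variable {k n : ℕ}

/-- Heights must be nonnegative; the shift by `k + n` does not change the tree distances. -/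
def dirWeight (s t : ℝ) (z : Grid2 k n) : ℝ≥0 := Real.toNNReal (k + n + s * z.1.1 + t * z.1.2)

lemma coe_dirWeight {s t : ℝ} (hs : |s| ≤ 1) (ht : |t| ≤ 1) (z : Grid2 k n) :
    (dirWeight s t z : ℝ) = k + n + s * z.1.1 + t * z.1.2 := by
  obtain ⟨h₁, h₁', h₂, h₂'⟩ := z.2
  have h₁ : (0 : ℝ) ≤ z.1.1 := by exact_mod_cast h₁
  have h₁' : (z.1.1 : ℝ) ≤ k := by exact_mod_cast h₁'
  have h₂ : (0 : ℝ) ≤ z.1.2 := by exact_mod_cast h₂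
  have h₂' : (z.1.2 : ℝ) ≤ n := by exact_mod_cast h₂'
  have := abs_le.1 hs
  have := abs_le.1 ht
  exact Real.coe_toNNReal _ (by nlinarith)

lemma abs_dirWeight_sub_le {s t : ℝ} (hs : |s| ≤ 1) (ht : |t| ≤ 1) (a b : Grid2 k n) :
    |(dirWeight s t a : ℝ) - dirWeight s t b| ≤ grid2Dist a b := by
  rw [coe_dirWeight hs ht, coe_dirWeight hs ht, grid2Dist]
  calc |(k + n + s * a.1.1 + t * a.1.2 : ℝ) - (k + n + s * b.1.1 + t * b.1.2)|
      = |s * (a.1.1 - b.1.1) + t * (a.1.2 - b.1.2)| := by ring_nf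
    _ ≤ |s| * |(a.1.1 : ℝ) - b.1.1| + |t| * |(a.1.2 : ℝ) - b.1.2| := by
      rw [← abs_mul, ← abs_mul]; exact abs_add_le _ _
    _ ≤ _ := add_le_add (mul_le_of_le_one_left (abs_nonneg _) hs)
      (mul_le_of_le_one_left (abs_nonneg _) ht)

/-- The sum of the widths of `support p q` in the diagonal directions `x₁ + x₂` and
`x₁ - x₂`. -/
def spread (p q : Lamp (Grid2 k n)) : ℝ :=
  excess (dirWeight 1 1) p q + excess (dirWeight (-1) (-1)) p q +
    excess (dirWeight 1 (-1)) p q + excess (dirWeight (-1) 1) p q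

lemma two_mul_sub_le_spread {p q : Lamp (Grid2 k n)} {a b : Grid2 k n} (ha : a ∈ support p q)
    (hb : b ∈ support p q) :
    2 * ((a.1.1 : ℝ) - b.1.1) ≤ spread p q ∧ 2 * ((a.1.2 : ℝ) - b.1.2) ≤ spread p q := by
  have h1 : |(1 : ℝ)| ≤ 1 := by norm_num
  have h2 : |(-1 : ℝ)| ≤ 1 := by norm_num
  have := sub_le_excess (dirWeight 1 1) ha
  have := sub_le_excess (dirWeight 1 1) hb
  have := sub_le_excess (dirWeight (-1) (-1)) ha
  have := sub_le_excess (dirWeight (-1) (-1)) hb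
  have := sub_le_excess (dirWeight 1 (-1)) ha
  have := sub_le_excess (dirWeight 1 (-1)) hb
  have := sub_le_excess (dirWeight (-1) 1) ha
  have := sub_le_excess (dirWeight (-1) 1) hb
  simp only [coe_dirWeight h1 h1, coe_dirWeight h2 h2, coe_dirWeight h1 h2,
    coe_dirWeight h2 h1] at *
  constructor <;> unfold spread <;> linarith

lemma spread_nonneg (p q : Lamp (Grid2 k n)) : 0 ≤ spread p q := by
  simpa using (two_mul_sub_le_spread (mem_support_left p q) (mem_support_left p q)).1

lemma spread_le_TSP (p q : Lamp (Grid2 k n)) : spread p q ≤ 4 * TSP grid2Dist p q := by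
  have h1 : |(1 : ℝ)| ≤ 1 := by norm_num
  have h2 : |(-1 : ℝ)| ≤ 1 := by norm_num
  have := excess_le_TSP grid2Dist_nonneg (abs_dirWeight_sub_le h1 h1) p q
  have := excess_le_TSP grid2Dist_nonneg (abs_dirWeight_sub_le h2 h2) p q
  have := excess_le_TSP grid2Dist_nonneg (abs_dirWeight_sub_le h1 h2) p q
  have := excess_le_TSP grid2Dist_nonneg (abs_dirWeight_sub_le h2 h1) p q
  unfold spread
  linarith

/-- Walk to a corner of a box containing `support p q`, sweep the box, and walk to `q.2`. -/
lemma TSP_le_of_forall_mem_box {p q : Lamp (Grid2 k n)} {a₁ a₂ : ℤ} {r₁ r₂ : ℕ}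
    (hbox : ∀ z ∈ support p q, z.1.1 ∈ Icc a₁ (a₁ + r₁) ∧ z.1.2 ∈ Icc a₂ (a₂ + r₂)) :
    TSP grid2Dist p q ≤ 3 * r₁ + 5 * r₂ + 2 * r₁ * r₂ := by
  obtain ⟨l, hhead, hlast, hcov, hlen⟩ := exists_box_tour (k := k) (n := n) a₁ a₂ r₁ r₂
  have hl : ∀ z ∈ sd p q, z ∈ l := fun z hz =>
    hcov z (hbox z (mem_support_of_mem_sd hz)).1 (hbox z (mem_support_of_mem_sd hz)).2
  have hcorner : ∀ z ∈ support p q, ∀ i j : ℤ, i ∈ Icc a₁ (a₁ + r₁) → j ∈ Icc a₂ (a₂ + r₂) →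
      grid2Dist z (Grid2.clamp i j) ≤ r₁ + r₂ := by
    intro z hz i j ⟨hi, hi'⟩ ⟨hj, hj'⟩
    obtain ⟨⟨hz₁, hz₁'⟩, ⟨hz₂, hz₂'⟩⟩ := hbox z hz
    rw [← Grid2.clamp_self z]
    refine (grid2Dist_clamp_le _ _ _ _).trans ?_
    have hzi : |z.1.1 - i| ≤ r₁ := abs_sub_le_iff.2 ⟨by omega, by omega⟩
    have hzj : |z.1.2 - j| ≤ r₂ := abs_sub_le_iff.2 ⟨by omega, by omega⟩
    push_cast [← Int.cast_sub, ← Int.cast_abs]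
    exact add_le_add (by exact_mod_cast hzi) (by exact_mod_cast hzj)
  have h₁ := hcorner p.2 (mem_support_left p q) a₁ a₂ ⟨le_rfl, by omega⟩ ⟨le_rfl, by omega⟩
  have h₂ := hcorner q.2 (mem_support_right p q) (a₁ + r₁) (a₂ + r₂) ⟨by omega, le_rfl⟩
    ⟨by omega, le_rfl⟩
  rw [grid2Dist_comm] at h₂
  linarith [TSP_le_add_pathLength_add grid2Dist_nonneg hhead hlast hl]

lemma TSP_le_spread (p q : Lamp (Grid2 k n)) : TSP grid2Dist p q ≤ (k + 4) * spread p q := by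
  have hS : (support p q).Nonempty := ⟨_, mem_support_left p q⟩
  obtain ⟨a₁, r₁, h₁, z, hz, z', hz', hr₁⟩ := exists_forall_mem_Icc hS fun z => z.1.1
  obtain ⟨a₂, r₂, h₂, w, hw, w', hw', hr₂⟩ := exists_forall_mem_Icc hS fun z => z.1.2
  have hr₁k : (r₁ : ℝ) ≤ k := by
    have := z.2.2.1
    have := z'.2.1
    exact_mod_cast (by omega : (r₁ : ℤ) ≤ k)
  have hr₁s : 2 * (r₁ : ℝ) ≤ spread p q := by
    have : ((z.1.1 : ℝ) - z'.1.1) = r₁ := by exact_mod_cast hr₁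
    simpa [this] using (two_mul_sub_le_spread hz hz').1
  have hr₂s : 2 * (r₂ : ℝ) ≤ spread p q := by
    have : ((w.1.2 : ℝ) - w'.1.2) = r₂ := by exact_mod_cast hr₂
    simpa [this] using (two_mul_sub_le_spread hw hw').2
  have hbox := TSP_le_of_forall_mem_box (p := p) (q := q) fun z hz => ⟨h₁ z hz, h₂ z hz⟩
  nlinarith [spread_nonneg p q, Nat.cast_nonneg (α := ℝ) r₁]

lemma eq_of_spread_eq_zero {p q : Lamp (Grid2 k n)} (hs : spread p q = 0) (hρ : rho p q = 0) :
    p = q := by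
  have h := two_mul_sub_le_spread (mem_support_left p q) (mem_support_right p q)
  have h' := two_mul_sub_le_spread (mem_support_right p q) (mem_support_left p q)
  refine Prod.ext (by by_contra hne; simp [rho, hne] at hρ) (Subtype.ext (Prod.ext ?_ ?_))
  · exact_mod_cast (by linarith : (p.2.1.1 : ℝ) = q.2.1.1)
  · exact_mod_cast (by linarith : (p.2.1.2 : ℝ) = q.2.1.2)

variable (k n) in
def gridMerge : Fin 6 → Grid2 k n → ℝ≥0 :=
  ![dirWeight 1 1, dirWeight (-1) (-1), dirWeight 1 (-1), dirWeight (-1) 1, fun _ => 1 / 2,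
    fun _ => 1 / 2]

variable (k n) in
def gridLevel : Fin 6 → Grid2 k n → ℝ≥0 :=
  ![dirWeight 1 1, dirWeight (-1) (-1), dirWeight 1 (-1), dirWeight (-1) 1, 0, 0]

/-- The first four trees measure the diagonal widths of `support p q`, the last two
whether the lamp configurations differ. -/
def gridEmbed (p : Lamp (Grid2 k n)) (i : Fin 6) : (lampGluing (gridMerge k n i)).Tree :=
  lampToTree (gridMerge k n i) (gridLevel k n i) p

lemma piL1Dist_gridEmbed (p q : Lamp (Grid2 k n)) :
    piL1Dist (fun _ => inferInstance) (gridEmbed p) (gridEmbed q) =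
      2 * spread p q + 2 * rho p q := by
  have h1 : |(1 : ℝ)| ≤ 1 := by norm_num
  have h2 : |(-1 : ℝ)| ≤ 1 := by norm_num
  change ∑ i, dist (gridEmbed p i) (gridEmbed q i) = _
  simp only [Fin.sum_univ_six, gridEmbed]
  rw [dist_lampToTree_of_eq (by rfl), dist_lampToTree_of_eq (by rfl),
    dist_lampToTree_of_eq (by rfl), dist_lampToTree_of_eq (by rfl),
    dist_lampToTree_eq_rho (by rfl) (by rfl), dist_lampToTree_eq_rho (by rfl) (by rfl)]
  simp only [gridMerge, Matrix.cons_val, spread, excess]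
  simp only [coe_dirWeight h1 h1, coe_dirWeight h2 h2, coe_dirWeight h1 h2, coe_dirWeight h2 h1]
  ring

theorem biLipWith_gridEmbed :
    BiLipWith (dLa grid2Dist) (piL1Dist fun _ => inferInstance) (4 * (k + 4))
      (gridEmbed (k := k) (n := n)) := by
  have hk : (0 : ℝ) < k + 4 := by positivity
  refine ⟨fun p q hpq => ?_, 2 / (k + 4), by positivity, fun p q => ?_⟩
  · have h := piL1Dist_gridEmbed p q
    rw [hpq, piL1Dist, Finset.sum_eq_zero fun i _ => dist_self _] at h
    have := spread_nonneg p q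
    have := rho_nonneg p q
    exact eq_of_spread_eq_zero (by linarith) (by linarith)
  rw [piL1Dist_gridEmbed, dLa]
  have := TSP_le_spread p q
  have := spread_le_TSP p q
  have := rho_nonneg p q
  constructor
  · rw [div_mul_eq_mul_div, div_le_iff₀ hk]
    nlinarith
  · rw [show 4 * ((k : ℝ) + 4) * (2 / (k + 4)) = 8 by field_simp; ring]
    linarith

end GridLamplighter

theorem statement17_general (k n : ℕ) :
    ∃ (T : Fin 6 → Type) (I : ∀ i, MetricSpace (T i)),
      (∀ i, @IsRTree (T i) (I i)) ∧
      ∃ f : Lamp (Grid2 k n) → ∀ i, T i,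
        BiLipWith (dLa (grid2Dist : Grid2 k n → Grid2 k n → ℝ)) (piL1Dist I)
          (12 * ((k : ℝ) + 5)) f :=
  ⟨_, _, fun i => (lampGluing (gridMerge k n i)).isRTree, gridEmbed,
    biLipWith_gridEmbed.mono (by linarith) (dLa_nonneg grid2Dist_nonneg)⟩

/-- For all `k ≤ n`, the lamplighter space `(La(G_{k,n}), d_La)` over
the two-dimensional grid `G_{k,n}` admits a biLipschitz embedding into an ℓ1-product of
6 ℝ-trees with distortion at most `12(k+5)`. -/
theorem statement17 (k n : ℕ) (h : k ≤ n) :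
    ∃ (T : Fin 6 → Type) (I : ∀ i, MetricSpace (T i)),
      (∀ i, @IsRTree (T i) (I i)) ∧
      ∃ f : Lamp (Grid2 k n) → ∀ i, T i,
        BiLipWith (dLa (grid2Dist : Grid2 k n → Grid2 k n → ℝ)) (piL1Dist I)
          (12 * ((k : ℝ) + 5)) f :=
  statement17_general k n

end Lamplighter
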